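/- Let (T(t))_{t≥0} be a bounded analytic C₀-semigroup on a complex Banach space X, encoded by: sup_{t≥0}‖T(t)‖ ≤ M₀, and a family (D(t))_{t>0} of bounded operators such that for every x ∈ X the map t ↦ T(t)x is differentiable on (0,∞) with derivative −D(t)x, and sup_{t>0} t‖D(t)‖ ≤ M₁; set M := max(2M₀, M₁). Let φ ∈ Φ with second-moment σ² = |φ″(0+)| and Lévy data (b, μ), and let (ν_t)_{t≥0} be the corresponding subordination measures. Then for all x ∈ X and t > 0: ‖T(t)x − ∫₀^∞ T(s)x dν_t(s)‖ ≤ (C/t)‖x‖, where C = 2(M₀ + 2M₁ + 2M₁²)σ² + 2M[ σ²/φ′(1) + φ′(1)/φ(1) ], with φ′(1) = b + ∫₀^∞ s e^{−s} dμ(s) and φ(1) = b + ∫₀^∞ (1−e^{−s}) dμ(s). -/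

import Mathlib

/-!
Read `∫ T(s)x dν_t(s)` as the expectation of `T(S)x` for a random time `S ≥ 0` with law `ν_t`.
Since `λ - σ²λ²/2 ≤ φ(λ) ≤ λ`, the Laplace transform `e^{-tφ(λ)}` of `S` gives (via Fatou as
`λ → 0`) `E S = t` and `Var S ≤ tσ²`. Analyticity gives `‖D(r)x - D(t)x‖ ≤ 4M₁²‖x‖·|1/t - 1/r|`
(the derivative of `D(r)x` is `-D(r/2)²x`), hence the Taylor bound
`‖T(s)x - T(t)x + (s - t)D(t)x‖ ≤ 4M₁²‖x‖(s - t)²/t²` for `s ≥ 2t/5`. Splitting the expectation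
at `2t/5`, the linear term has mean zero, the Taylor remainder costs `Var S/t²`, and the event
`S < 2t/5` is controlled by Chebyshev's inequality. This gives the constant
`(50/9 M₀ + 5/3 M₁ + 4M₁²)σ²`, which is below the stated one because `0 < φ′(1) ≤ 1`.
-/

open MeasureTheory Set Filter Topology

theorem exp_neg_le_one_sub_add_sq_div_two {u : ℝ} (hu : 0 ≤ u) :
    Real.exp (-u) ≤ 1 - u + u ^ 2 / 2 := by
  have hexp : 1 + u + u ^ 2 / 2 + u ^ 3 / 6 ≤ Real.exp u := by
    simpa [Finset.sum_range_succ, Nat.factorial] using Real.sum_le_exp_of_nonneg hu 4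
  -- `(1 - u + u²/2)(1 + u + u²/2 + u³/6) = 1 + u³/6 + u⁴/12 + u⁵/12`
  rw [Real.exp_neg, inv_le_iff_one_le_mul₀ (Real.exp_pos u)]
  nlinarith [mul_le_mul_of_nonneg_left hexp (by nlinarith : (0 : ℝ) ≤ 1 - u + u ^ 2 / 2),
    pow_nonneg hu 3, pow_nonneg hu 4, pow_nonneg hu 5]

theorem one_sub_add_sub_cube_le_exp_neg {u : ℝ} (hu : 0 ≤ u) :
    1 - u + u ^ 2 / 2 - u ^ 3 / 6 ≤ Real.exp (-u) := by
  let g : ℝ → ℝ := fun v => Real.exp (-v) - (1 - v + v ^ 2 / 2 - v ^ 3 / 6)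
  have hg : ∀ v, HasDerivAt g (1 - v + v ^ 2 / 2 - Real.exp (-v)) v := fun v => by
    refine (((Real.hasDerivAt_exp (-v)).comp v (hasDerivAt_neg v)).sub
      ((((hasDerivAt_id v).const_sub 1).add ((hasDerivAt_pow 2 v).div_const 2)).sub
        ((hasDerivAt_pow 3 v).div_const 6))).congr_deriv ?_
    norm_num; ring
  have hmono : MonotoneOn g (Ici 0) := by
    refine monotoneOn_of_hasDerivWithinAt_nonneg (convex_Ici 0)
      (fun v _ => (hg v).continuousAt.continuousWithinAt) (fun v _ => (hg v).hasDerivWithinAt)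
      fun v hv => ?_
    rw [interior_Ici] at hv
    linarith [exp_neg_le_one_sub_add_sq_div_two (le_of_lt hv)]
  have := hmono self_mem_Ici hu hu
  simp only [g, neg_zero, Real.exp_zero] at this
  linarith

theorem norm_sub_le_of_norm_deriv_le {E : Type*} [NormedAddCommGroup E] [NormedSpace ℝ E]
    {f f' : ℝ → E} {B B' : ℝ → ℝ} {a b : ℝ} (hab : a ≤ b)
    (hf : ∀ r ∈ Icc a b, HasDerivAt f (f' r) r) (hB : ∀ r ∈ Icc a b, HasDerivAt B (B' r) r)
    (hbound : ∀ r ∈ Icc a b, ‖f' r‖ ≤ B' r) :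
    ‖f b - f a‖ ≤ B b - B a :=
  image_norm_le_of_norm_deriv_right_le_deriv_boundary' (f := fun r => f r - f a)
    (B := fun r => B r - B a)
    (fun r hr => ((hf r hr).sub_const _).continuousAt.continuousWithinAt)
    (fun r hr => ((hf r (Ico_subset_Icc_self hr)).sub_const _).hasDerivWithinAt)
    (by simp)
    (fun r hr => ((hB r hr).sub_const _).continuousAt.continuousWithinAt)
    (fun r hr => ((hB r (Ico_subset_Icc_self hr)).sub_const _).hasDerivWithinAt)
    (fun r hr => hbound r (Ico_subset_Icc_self hr)) (right_mem_Icc.mpr hab)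

theorem norm_sub_sub_smul_le_of_norm_deriv_sub_le {E : Type*} [NormedAddCommGroup E]
    [NormedSpace ℝ E] {f f' : ℝ → E} {a b K K' : ℝ} (hab : a ≤ b)
    (hf : ∀ r ∈ Icc a b, HasDerivAt f (f' r) r)
    (hf' : ∀ r ∈ Icc a b, ‖f' r - f' a‖ ≤ K * (r - a) + K' * (r - a) ^ 2) :
    ‖f b - f a - (b - a) • f' a‖ ≤ K / 2 * (b - a) ^ 2 + K' / 3 * (b - a) ^ 3 := by
  have key := norm_sub_le_of_norm_deriv_le (f := fun r => f r - f a - (r - a) • f' a)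
    (B := fun r => K / 2 * (r - a) ^ 2 + K' / 3 * (r - a) ^ 3) hab
    (fun r hr => by
      convert ((hf r hr).sub_const (f a)).sub (((hasDerivAt_id r).sub_const a).smul_const (f' a))
        using 1
      · ext r; simp
      · simp)
    (fun r _ => by
      refine (((((hasDerivAt_id r).sub_const a).pow 2).const_mul (K / 2)).add
        ((((hasDerivAt_id r).sub_const a).pow 3).const_mul (K' / 3))).congr_deriv ?_
      norm_num; ring) hf'
  simpa using key

theorem norm_sub_sub_smul_le_of_norm_deriv_sub_le' {E : Type*} [NormedAddCommGroup E]
    [NormedSpace ℝ E] {f f' : ℝ → E} {a b K K' : ℝ} (hba : b ≤ a)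
    (hf : ∀ r ∈ Icc b a, HasDerivAt f (f' r) r)
    (hf' : ∀ r ∈ Icc b a, ‖f' r - f' a‖ ≤ K * (a - r) + K' * (a - r) ^ 2) :
    ‖f b - f a - (b - a) • f' a‖ ≤ K / 2 * (a - b) ^ 2 + K' / 3 * (a - b) ^ 3 := by
  have key := norm_sub_sub_smul_le_of_norm_deriv_sub_le (f := fun r => f (-r))
    (f' := fun r => -f' (-r)) (a := -a) (b := -b) (K := K) (K' := K') (neg_le_neg hba)
    (fun r hr => by
      simpa [Function.comp_def] using
        (hf (-r) ⟨le_neg.mpr hr.2, neg_le.mpr hr.1⟩).scomp r (hasDerivAt_neg r))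
    (fun r hr => by
      rw [← norm_neg]
      simpa [add_comm, sub_eq_add_neg] using hf' (-r) ⟨le_neg.mpr hr.2, neg_le.mpr hr.1⟩)
  convert key using 2
  · rw [neg_neg, neg_neg, smul_neg, ← neg_smul, neg_sub_neg, neg_sub]
  · ring
  · ring

theorem integrable_and_integral_le_of_tendsto {μ : Measure ℝ} {G : ℕ → ℝ → ℝ} {g : ℝ → ℝ}
    {C : ℝ} (hGg : ∀ᵐ s ∂μ, Tendsto (fun n => G n s) atTop (𝓝 (g s)))
    (hG : ∀ n, Integrable (G n) μ) (hG₀ : ∀ n, 0 ≤ᵐ[μ] G n) (hC : ∀ n, ∫ s, G n s ∂μ ≤ C) :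
    Integrable g μ ∧ ∫ s, g s ∂μ ≤ C := by
  have hlintegral : ∀ n, ∫⁻ s, ‖G n s‖ₑ ∂μ ≤ ENNReal.ofReal C := fun n => by
    rw [lintegral_congr_ae ((hG₀ n).mono fun s hs => Real.enorm_of_nonneg hs),
      ← ofReal_integral_eq_lintegral_ofReal (hG n) (hG₀ n)]
    exact ENNReal.ofReal_le_ofReal (hC n)
  have hliminf : liminf (fun n => ∫⁻ s, ‖G n s‖ₑ ∂μ) atTop ≤ ENNReal.ofReal C :=
    (liminf_le_liminf (Eventually.of_forall hlintegral)).trans_eq (liminf_const _)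
  have hg : Integrable g μ := integrable_of_tendsto hGg (fun n => (hG n).aestronglyMeasurable)
    (ne_top_of_le_ne_top ENNReal.ofReal_ne_top hliminf)
  refine ⟨hg, ?_⟩
  calc ∫ s, g s ∂μ ≤ ∫ s, ‖g s‖ ∂μ := integral_mono hg hg.norm fun s => Real.le_norm_self (g s)
    _ = (∫⁻ s, ‖g s‖ₑ ∂μ).toReal := integral_norm_eq_lintegral_enorm hg.aestronglyMeasurable
    _ ≤ (ENNReal.ofReal C).toReal := ENNReal.toReal_mono ENNReal.ofReal_ne_top
      ((lintegral_enorm_le_liminf_of_tendsto hGg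
        fun n => (hG n).aemeasurable.enorm).trans hliminf)
    _ = C := ENNReal.toReal_ofReal ((integral_nonneg_of_ae (hG₀ 0)).trans (hC 0))

section Moments

variable {κ : Measure ℝ} {φ : ℝ → ℝ} {t σ2 : ℝ}

theorem integrable_exp_neg_mul [IsFiniteMeasure κ] (hκ : ∀ᵐ s ∂κ, 0 ≤ s) {l : ℝ} (hl : 0 ≤ l) :
    Integrable (fun s => Real.exp (-(l * s))) κ :=
  (integrable_const (1 : ℝ)).mono' (by fun_prop) <| hκ.mono fun s hs => by
    rw [Real.norm_of_nonneg (Real.exp_pos _).le, Real.exp_le_one_iff]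
    nlinarith

variable [IsProbabilityMeasure κ]

theorem integrable_id_and_integral_le_of_laplace (ht : 0 ≤ t) (hκ : ∀ᵐ s ∂κ, 0 ≤ s)
    (hL : ∀ l, 0 < l → ∫ s, Real.exp (-(l * s)) ∂κ = Real.exp (-(t * φ l)))
    (hφ_le : ∀ l, 0 < l → φ l ≤ l) :
    Integrable (fun s => s) κ ∧ ∫ s, s ∂κ ≤ t := by
  set l : ℕ → ℝ := fun n => 1 / (n + 1)
  have hl : ∀ n, 0 < l n := fun n => by positivity
  refine integrable_and_integral_le_of_tendsto (G := fun n s => (1 - Real.exp (-(l n * s))) / l n)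
    ?_ (fun n => ((integrable_const 1).sub (integrable_exp_neg_mul hκ (hl n).le)).div_const _)
    (fun n => hκ.mono fun s hs => div_nonneg ?_ (hl n).le) fun n => ?_
  · filter_upwards [hκ] with s hs
    refine tendsto_of_tendsto_of_tendsto_of_le_of_le (g := fun n => s - l n * s ^ 2 / 2) ?_
      tendsto_const_nhds (fun n => ?_) fun n => ?_
    · simpa [l] using
        ((tendsto_one_div_add_atTop_nhds_zero_nat.mul_const (s ^ 2)).div_const 2).const_sub s
    · rw [le_div_iff₀ (hl n)]
      nlinarith [exp_neg_le_one_sub_add_sq_div_two (mul_nonneg (hl n).le hs)]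
    · rw [div_le_iff₀ (hl n)]
      nlinarith [Real.one_sub_le_exp_neg (l n * s)]
  · linarith [Real.exp_le_one_iff.mpr (by nlinarith [(hl n).le] : -(l n * s) ≤ 0)]
  · rw [integral_div, integral_sub (integrable_const 1) (integrable_exp_neg_mul hκ (hl n).le),
      hL _ (hl n), div_le_iff₀ (hl n)]
    simp only [integral_const, probReal_univ, smul_eq_mul, one_mul]
    nlinarith [Real.one_sub_le_exp_neg (t * φ (l n)), hφ_le _ (hl n)]

theorem integrable_id_and_integral_eq_of_laplace (ht : 0 ≤ t) (hκ : ∀ᵐ s ∂κ, 0 ≤ s)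
    (hL : ∀ l, 0 < l → ∫ s, Real.exp (-(l * s)) ∂κ = Real.exp (-(t * φ l)))
    (hφ₀ : ∀ l, 0 < l → 0 ≤ φ l) (hφ_le : ∀ l, 0 < l → φ l ≤ l)
    (hφ_ge : ∀ l, 0 < l → l - l ^ 2 * σ2 / 2 ≤ φ l) :
    Integrable (fun s => s) κ ∧ ∫ s, s ∂κ = t := by
  obtain ⟨hint, hle⟩ := integrable_id_and_integral_le_of_laplace ht hκ hL hφ_le
  refine ⟨hint, le_antisymm hle ?_⟩
  -- `∫ s ≥ ∫ (1 - e^{-ls})/l = (1 - e^{-tφ(l)})/l ≥ t - l (tσ² + t²)/2` for every `l > 0`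
  have hlower : ∀ l, 0 < l → t - l * ((t * σ2 + t ^ 2) / 2) ≤ ∫ s, s ∂κ := fun l hl => by
    have hint_l : Integrable (fun s => (1 - Real.exp (-(l * s))) / l) κ :=
      ((integrable_const 1).sub (integrable_exp_neg_mul hκ hl.le)).div_const _
    have hmono : ∫ s, (1 - Real.exp (-(l * s))) / l ∂κ ≤ ∫ s, s ∂κ :=
      integral_mono_ae hint_l hint <| hκ.mono fun s hs => by
        rw [div_le_iff₀ hl]
        nlinarith [Real.one_sub_le_exp_neg (l * s)]
    rw [integral_div, integral_sub (integrable_const 1) (integrable_exp_neg_mul hκ hl.le), hL l hl]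
      at hmono
    simp only [integral_const, probReal_univ, smul_eq_mul, one_mul] at hmono
    refine le_trans ?_ hmono
    have hu := mul_nonneg ht (hφ₀ l hl)
    have hul : t * φ l ≤ t * l := mul_le_mul_of_nonneg_left (hφ_le l hl) ht
    rw [le_div_iff₀ hl]
    nlinarith [exp_neg_le_one_sub_add_sq_div_two hu, mul_le_mul_of_nonneg_left (hφ_ge l hl) ht,
      mul_le_mul hul hul hu (by positivity)]
  refine le_of_tendsto (x := 𝓝[>] 0) ?_ (eventually_nhdsWithin_of_forall hlower)
  exact ((continuous_const.sub (continuous_id.mul continuous_const)).tendsto' 0 t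
    (by simp)).mono_left nhdsWithin_le_nhds

theorem integrable_sq_and_integral_le_of_laplace (ht : 0 ≤ t) (hκ : ∀ᵐ s ∂κ, 0 ≤ s)
    (hL : ∀ l, 0 < l → ∫ s, Real.exp (-(l * s)) ∂κ = Real.exp (-(t * φ l)))
    (hφ₀ : ∀ l, 0 < l → 0 ≤ φ l) (hφ_le : ∀ l, 0 < l → φ l ≤ l)
    (hφ_ge : ∀ l, 0 < l → l - l ^ 2 * σ2 / 2 ≤ φ l) :
    Integrable (fun s => s ^ 2) κ ∧ ∫ s, s ^ 2 ∂κ ≤ t ^ 2 + t * σ2 := by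
  obtain ⟨hint, hmean⟩ := integrable_id_and_integral_eq_of_laplace ht hκ hL hφ₀ hφ_le hφ_ge
  set l : ℕ → ℝ := fun n => 1 / (n + 1)
  have hl : ∀ n, 0 < l n := fun n => by positivity
  refine integrable_and_integral_le_of_tendsto
    (G := fun n s => 2 / l n ^ 2 * (Real.exp (-(l n * s)) - 1 + l n * s)) ?_
    (fun n => ((((integrable_exp_neg_mul hκ (hl n).le).sub (integrable_const 1)).add
      (hint.const_mul (l n))).const_mul _))
    (fun n => Eventually.of_forall fun s => mul_nonneg (by positivity) ?_) fun n => ?_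
  · filter_upwards [hκ] with s hs
    refine tendsto_of_tendsto_of_tendsto_of_le_of_le (g := fun n => s ^ 2 - l n * s ^ 3 / 3) ?_
      tendsto_const_nhds (fun n => ?_) fun n => ?_
    · simpa [l] using
        ((tendsto_one_div_add_atTop_nhds_zero_nat.mul_const (s ^ 3)).div_const 3).const_sub (s ^ 2)
    · rw [div_mul_eq_mul_div, le_div_iff₀ (by positivity)]
      nlinarith [one_sub_add_sub_cube_le_exp_neg (mul_nonneg (hl n).le hs)]
    · rw [div_mul_eq_mul_div, div_le_iff₀ (by positivity)]
      nlinarith [exp_neg_le_one_sub_add_sq_div_two (mul_nonneg (hl n).le hs)]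
  · linarith [Real.one_sub_le_exp_neg (l n * s)]
  · have hexp := integrable_exp_neg_mul hκ (hl n).le
    have hexp_sub : Integrable (fun s => Real.exp (-(l n * s)) - 1) κ :=
      hexp.sub (integrable_const 1)
    rw [integral_const_mul, integral_add hexp_sub (hint.const_mul _),
      integral_sub hexp (integrable_const 1), hL _ (hl n), integral_const_mul, hmean,
      div_mul_eq_mul_div, div_le_iff₀ (by positivity)]
    simp only [integral_const, probReal_univ, smul_eq_mul, one_mul]
    -- with `u = tφ(l) ∈ [0, tl]`: `e^{-u} - 1 + lt ≤ t(l - φ(l)) + u²/2 ≤ l²(tσ² + t²)/2`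
    have hu := mul_nonneg ht (hφ₀ _ (hl n))
    have hul : t * φ (l n) ≤ t * l n := mul_le_mul_of_nonneg_left (hφ_le _ (hl n)) ht
    nlinarith [exp_neg_le_one_sub_add_sq_div_two hu, mul_le_mul_of_nonneg_left (hφ_ge _ (hl n)) ht,
      mul_le_mul hul hul hu (by positivity)]

theorem integrable_sub_sq_and_integral_le_of_laplace (ht : 0 ≤ t) (hκ : ∀ᵐ s ∂κ, 0 ≤ s)
    (hL : ∀ l, 0 < l → ∫ s, Real.exp (-(l * s)) ∂κ = Real.exp (-(t * φ l)))
    (hφ₀ : ∀ l, 0 < l → 0 ≤ φ l) (hφ_le : ∀ l, 0 < l → φ l ≤ l)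
    (hφ_ge : ∀ l, 0 < l → l - l ^ 2 * σ2 / 2 ≤ φ l) :
    Integrable (fun s => (s - t) ^ 2) κ ∧ ∫ s, (s - t) ^ 2 ∂κ ≤ t * σ2 := by
  obtain ⟨hint, hmean⟩ := integrable_id_and_integral_eq_of_laplace ht hκ hL hφ₀ hφ_le hφ_ge
  obtain ⟨hint2, hle⟩ := integrable_sq_and_integral_le_of_laplace ht hκ hL hφ₀ hφ_le hφ_ge
  have hexpand : (fun s => (s - t) ^ 2) = fun s => s ^ 2 - 2 * t * s + t ^ 2 := by
    ext s; ring
  have hint' : Integrable (fun s => s ^ 2 - 2 * t * s) κ := hint2.sub (hint.const_mul _)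
  refine ⟨hexpand ▸ hint'.add (integrable_const _), ?_⟩
  rw [hexpand, integral_add hint' (integrable_const _), integral_sub hint2 (hint.const_mul _),
    integral_const_mul, hmean]
  simp only [integral_const, probReal_univ, smul_eq_mul, one_mul]
  linarith

end Moments

section Chebyshev

variable {κ : Measure ℝ} [IsFiniteMeasure κ] {c t : ℝ}

theorem measureReal_Iio_le_integral_sub_sq_div (hct : c < t)
    (hint : Integrable (fun s => (s - t) ^ 2) κ) :
    κ.real (Iio c) ≤ (∫ s, (s - t) ^ 2 ∂κ) / (t - c) ^ 2 := by
  have hct' : 0 < t - c := sub_pos.mpr hct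
  calc κ.real (Iio c) = ∫ _ in Iio c, (1 : ℝ) ∂κ := by simp
    _ ≤ ∫ s in Iio c, (s - t) ^ 2 / (t - c) ^ 2 ∂κ :=
      setIntegral_mono_on (integrable_const _) (hint.div_const _).integrableOn measurableSet_Iio
        fun s (hs : s < c) => by rw [le_div_iff₀ (by positivity)]; nlinarith
    _ ≤ ∫ s, (s - t) ^ 2 / (t - c) ^ 2 ∂κ :=
      setIntegral_le_integral (hint.div_const _) (Eventually.of_forall fun s => by positivity)
    _ = (∫ s, (s - t) ^ 2 ∂κ) / (t - c) ^ 2 := integral_div _ _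

theorem abs_setIntegral_Iio_sub_le (hct : c < t) (hint : Integrable (fun s => s) κ)
    (hint2 : Integrable (fun s => (s - t) ^ 2) κ) :
    |∫ s in Iio c, (s - t) ∂κ| ≤ (∫ s, (s - t) ^ 2 ∂κ) / (t - c) := by
  have hct' : 0 < t - c := sub_pos.mpr hct
  have hneg : ∫ s in Iio c, (s - t) ∂κ ≤ 0 :=
    setIntegral_nonpos measurableSet_Iio fun s (hs : s < c) => by linarith
  rw [abs_of_nonpos hneg, ← integral_neg]
  calc ∫ s in Iio c, -(s - t) ∂κ ≤ ∫ s in Iio c, (s - t) ^ 2 / (t - c) ∂κ :=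
      setIntegral_mono_on (hint.sub (integrable_const t)).neg.integrableOn
        (hint2.div_const _).integrableOn measurableSet_Iio
        fun s (hs : s < c) => by rw [le_div_iff₀ hct']; nlinarith
    _ ≤ ∫ s, (s - t) ^ 2 / (t - c) ∂κ :=
      setIntegral_le_integral (hint2.div_const _) (Eventually.of_forall fun s => by positivity)
    _ = (∫ s, (s - t) ^ 2 ∂κ) / (t - c) := integral_div _ _

end Chebyshev

section Splitting

variable {E : Type*} [NormedAddCommGroup E] [NormedSpace ℝ E] [CompleteSpace E]
  {κ : Measure ℝ} [IsProbabilityMeasure κ] {F : ℝ → E} {v : E} {t : ℝ}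

theorem sub_integral_eq_Iio_add_Ici (c : ℝ) (hFint : Integrable F κ)
    (hint : Integrable (fun s => s) κ) (hmean : ∫ s, s ∂κ = t) :
    F t - ∫ s, F s ∂κ = (∫ s in Iio c, (F t - F s) ∂κ)
      + ((-∫ s in Iio c, (s - t) ∂κ) • v - ∫ s in Ici c, (F s - F t + (s - t) • v) ∂κ) := by
  have hsub : Integrable (fun s => s - t) κ := hint.sub (integrable_const t)
  have hdiff : Integrable (fun s => F t - F s) κ := (integrable_const _).sub hFint
  have hrem : Integrable (fun s => F s - F t + (s - t) • v) κ :=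
    (hFint.sub (integrable_const _)).add (hsub.smul_const v)
  have hmean' : (∫ s in Iio c, (s - t) ∂κ) + ∫ s in Ici c, (s - t) ∂κ = 0 := by
    rw [← compl_Iio, integral_add_compl measurableSet_Iio hsub,
      integral_sub hint (integrable_const t), hmean]
    simp
  have hIci : ∫ s in Ici c, (F t - F s) ∂κ
      = (∫ s in Ici c, (s - t) ∂κ) • v - ∫ s in Ici c, (F s - F t + (s - t) • v) ∂κ := by
    rw [← integral_smul_const, ← integral_sub (hsub.smul_const v).integrableOn hrem.integrableOn]
    congr 1; ext s; abel
  have hconst : ∫ s, (F t - F s) ∂κ = F t - ∫ s, F s ∂κ := by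
    rw [integral_sub (integrable_const _) hFint]
    simp
  rw [← hconst, ← integral_add_compl measurableSet_Iio hdiff, compl_Iio, hIci,
    eq_neg_of_add_eq_zero_right hmean']

theorem norm_sub_integral_le_of_taylor {σ2 a K : ℝ} (ht : 0 < t)
    (hFm : AEStronglyMeasurable F κ) (hF : ∀ᵐ s ∂κ, ‖F t - F s‖ ≤ a)
    (hR : ∀ s, 2 * t / 5 ≤ s → ‖F s - F t + (s - t) • v‖ ≤ K * (s - t) ^ 2 / t ^ 2)
    (hint : Integrable (fun s => s) κ) (hmean : ∫ s, s ∂κ = t)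
    (hint2 : Integrable (fun s => (s - t) ^ 2) κ) (hvar : ∫ s, (s - t) ^ 2 ∂κ ≤ t * σ2) :
    ‖F t - ∫ s, F s ∂κ‖ ≤ a * (25 / (9 * t) * σ2) + 5 / 3 * σ2 * ‖v‖ + K * σ2 / t := by
  -- Near `t` use the Taylor bound `hR`; below `c = 2t/5` only the crude bound `hF`, paid for by
  -- the Chebyshev estimate of the mass and of the first moment there.
  set c := 2 * t / 5 with hc
  have hct : c < t := by linarith
  have ha : 0 ≤ a := by
    obtain ⟨s, hs⟩ := hF.exists
    exact (norm_nonneg _).trans hs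
  have hK : 0 ≤ K := by
    have := (norm_nonneg _).trans (hR (2 * t) (by linarith))
    rwa [show K * (2 * t - t) ^ 2 / t ^ 2 = K by field_simp; ring] at this
  have hFint : Integrable F κ := (integrable_const (‖F t‖ + a)).mono' hFm <| hF.mono fun s hs =>
    calc ‖F s‖ = ‖F t - (F t - F s)‖ := by rw [sub_sub_cancel]
      _ ≤ ‖F t‖ + a := (norm_sub_le _ _).trans (by linarith)
  have h1 : ‖∫ s in Iio c, (F t - F s) ∂κ‖ ≤ a * (25 / (9 * t) * σ2) :=
    calc _ ≤ a * κ.real (Iio c) :=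
          norm_setIntegral_le_of_norm_le_const_ae (measure_lt_top _ _) (ae_restrict_of_ae hF)
      _ ≤ a * ((∫ s, (s - t) ^ 2 ∂κ) / (t - c) ^ 2) :=
          mul_le_mul_of_nonneg_left (measureReal_Iio_le_integral_sub_sq_div hct hint2) ha
      _ ≤ a * (t * σ2 / (t - c) ^ 2) := by gcongr
      _ = a * (25 / (9 * t) * σ2) := by rw [hc]; field_simp; ring
  have h2 : ‖(-∫ s in Iio c, (s - t) ∂κ) • v‖ ≤ 5 / 3 * σ2 * ‖v‖ := by
    rw [norm_smul, norm_neg, Real.norm_eq_abs]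
    gcongr
    calc |∫ s in Iio c, (s - t) ∂κ| ≤ (∫ s, (s - t) ^ 2 ∂κ) / (t - c) :=
          abs_setIntegral_Iio_sub_le hct hint hint2
      _ ≤ t * σ2 / (t - c) := by gcongr
      _ = 5 / 3 * σ2 := by rw [hc]; field_simp; ring
  have h3 : ‖∫ s in Ici c, (F s - F t + (s - t) • v) ∂κ‖ ≤ K * σ2 / t :=
    calc _ ≤ ∫ s in Ici c, K / t ^ 2 * (s - t) ^ 2 ∂κ :=
          norm_integral_le_of_norm_le (hint2.const_mul _).integrableOn <|
            (ae_restrict_mem measurableSet_Ici).mono fun s hs => (hR s hs).trans_eq (by ring)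
      _ ≤ ∫ s, K / t ^ 2 * (s - t) ^ 2 ∂κ :=
          setIntegral_le_integral (hint2.const_mul _) (Eventually.of_forall fun s => by positivity)
      _ ≤ K / t ^ 2 * (t * σ2) := by
          rw [integral_const_mul]; exact mul_le_mul_of_nonneg_left hvar (by positivity)
      _ = K * σ2 / t := by field_simp
  rw [sub_integral_eq_Iio_add_Ici c hFint hint hmean]
  exact (norm_add_le _ _).trans (add_le_add h1 (norm_sub_le _ _ |>.trans (add_le_add h2 h3)))
    |>.trans_eq (by ring)

end Splitting

section AnalyticSemigroup

variable {X : Type*} [NormedAddCommGroup X] [NormedSpace ℂ X] {T D : ℝ → X →L[ℂ] X}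

theorem D_add_apply (hTadd : ∀ s t : ℝ, 0 ≤ s → 0 ≤ t → T (s + t) = (T s).comp (T t))
    (hD : ∀ x : X, ∀ t : ℝ, 0 < t → HasDerivAt (fun r => T r x) (-(D t x)) t)
    (x : X) {r u : ℝ} (hr : 0 < r) (hu : 0 ≤ u) : D (r + u) x = D r (T u x) := by
  -- both sides are minus the derivative at `r` of `v ↦ T (v + u) x = T v (T u x)`
  have hshift : HasDerivAt (fun v => T (v + u) x) (-(D (r + u) x)) r :=
    (hD x (r + u) (by linarith)).comp_add_const r u
  have heq : (fun v => T (v + u) x) =ᶠ[𝓝 r] fun v => T v (T u x) := by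
    filter_upwards [Ioi_mem_nhds hr] with v (hv : 0 < v)
    rw [hTadd v u hv.le hu]; rfl
  exact neg_inj.mp ((heq.hasDerivAt_iff.mp hshift).unique (hD (T u x) r hr))

theorem hasDerivAt_D_apply (hTadd : ∀ s t : ℝ, 0 ≤ s → 0 ≤ t → T (s + t) = (T s).comp (T t))
    (hD : ∀ x : X, ∀ t : ℝ, 0 < t → HasDerivAt (fun r => T r x) (-(D t x)) t)
    (x : X) {s : ℝ} (hs : 0 < s) :
    HasDerivAt (fun r => D r x) (-D (s / 2) (D (s / 2) x)) s := by
  have hT : HasDerivAt (fun r => T (r - s / 2) x) (-(D (s / 2) x)) s :=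
    (hD x (s - s / 2) (by linarith)).comp_sub_const s (s / 2) |>.congr_deriv (by ring_nf)
  have hDT : HasDerivAt (fun r => D (s / 2) (T (r - s / 2) x)) (-D (s / 2) (D (s / 2) x)) s := by
    have := ((D (s / 2)).restrictScalars ℝ).hasFDerivAt.comp_hasDerivAt s hT
    simp only [ContinuousLinearMap.coe_restrictScalars', map_neg] at this
    exact this
  refine hDT.congr_of_eventuallyEq ?_
  filter_upwards [Ioi_mem_nhds (half_lt_self hs)] with r (hr : s / 2 < r)
  simpa using D_add_apply hTadd hD x (half_pos hs) (sub_nonneg.mpr hr.le)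

theorem norm_D_le {M₁ : ℝ} (hM1 : ∀ t : ℝ, 0 < t → t * ‖D t‖ ≤ M₁) {t : ℝ} (ht : 0 < t) :
    ‖D t‖ ≤ M₁ / t := by
  rw [le_div_iff₀ ht, mul_comm]
  exact hM1 t ht

theorem norm_D_apply_sub_le {M₁ : ℝ}
    (hTadd : ∀ s t : ℝ, 0 ≤ s → 0 ≤ t → T (s + t) = (T s).comp (T t))
    (hD : ∀ x : X, ∀ t : ℝ, 0 < t → HasDerivAt (fun r => T r x) (-(D t x)) t)
    (hM1 : ∀ t : ℝ, 0 < t → t * ‖D t‖ ≤ M₁) (x : X) {a c : ℝ} (ha : 0 < a) (hac : a ≤ c) :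
    ‖D c x - D a x‖ ≤ 4 * M₁ ^ 2 * ‖x‖ * (1 / a - 1 / c) := by
  set K := 4 * M₁ ^ 2 * ‖x‖
  have hpos : ∀ r ∈ Icc a c, 0 < r := fun r hr => ha.trans_le hr.1
  have key := norm_sub_le_of_norm_deriv_le (B := fun r => -(K * r⁻¹))
    (B' := fun r => K * (r ^ 2)⁻¹) hac (fun r hr => hasDerivAt_D_apply hTadd hD x (hpos r hr))
    (fun r hr => ((hasDerivAt_inv (hpos r hr).ne').const_mul K).neg.congr_deriv (by ring))
    (fun r hr => by
      have hD2 := norm_D_le hM1 (half_pos (hpos r hr))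
      calc ‖-D (r / 2) (D (r / 2) x)‖ ≤ ‖D (r / 2)‖ * (‖D (r / 2)‖ * ‖x‖) := by
            rw [norm_neg]
            exact (D _).le_opNorm_of_le ((D _).le_opNorm x)
        _ ≤ M₁ / (r / 2) * (M₁ / (r / 2) * ‖x‖) := by gcongr; exact (norm_nonneg _).trans hD2
        _ = K * (r ^ 2)⁻¹ := by field_simp; ring)
  exact key.trans_eq (by ring)

theorem norm_taylor_remainder_le
    (hD : ∀ x : X, ∀ t : ℝ, 0 < t → HasDerivAt (fun r => T r x) (-(D t x)) t)
    {x : X} {K : ℝ} (hK : 0 ≤ K)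
    (hlip : ∀ a c, 0 < a → a ≤ c → ‖D c x - D a x‖ ≤ K * (1 / a - 1 / c))
    {t s : ℝ} (ht : 0 < t) (hs : 2 * t / 5 ≤ s) :
    ‖T s x - T t x + (s - t) • D t x‖ ≤ K * (s - t) ^ 2 / t ^ 2 := by
  have hf : ∀ r, 0 < r → HasDerivAt (fun r => T r x) (-D r x) r := fun r hr => hD x r hr
  have hrem : T s x - T t x + (s - t) • D t x = T s x - T t x - (s - t) • -D t x := by
    rw [smul_neg, sub_neg_eq_add]
  rw [hrem]
  rcases le_total t s with hts | hst
  · refine (norm_sub_sub_smul_le_of_norm_deriv_sub_le (K := K / t ^ 2) (K' := 0) hts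
      (fun r hr => hf r (ht.trans_le hr.1)) fun r hr => ?_).trans ?_
    · have hr₀ := ht.trans_le hr.1
      rw [← neg_sub', norm_neg, zero_mul, add_zero]
      calc ‖D r x - D t x‖ ≤ K * (1 / t - 1 / r) := hlip t r ht hr.1
        _ = K * ((r - t) / (t * r)) := by field_simp
        _ ≤ K * ((r - t) / (t * t)) := by gcongr <;> linarith [hr.1]
        _ = K / t ^ 2 * (r - t) := by ring
    · have : 0 ≤ K * (s - t) ^ 2 / t ^ 2 := by positivity
      linarith [show K / t ^ 2 / 2 * (s - t) ^ 2 = K * (s - t) ^ 2 / t ^ 2 / 2 by ring,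
        show (0 : ℝ) / 3 * (s - t) ^ 3 = 0 by ring]
  · refine (norm_sub_sub_smul_le_of_norm_deriv_sub_le' (K := K / t ^ 2)
      (K' := 5 * K / (2 * t ^ 3)) hst (fun r hr => hf r (by linarith [hr.1]))
      fun r hr => ?_).trans ?_
    · have hr₀ : 0 < r := by linarith [hr.1]
      rw [neg_sub_neg]
      -- `1/r - 1/t = (t - r)/t² + (t - r)²/(r t²)` and `r ≥ 2t/5`
      calc ‖D t x - D r x‖ ≤ K * (1 / r - 1 / t) := hlip r t hr₀ hr.2
        _ = K / t ^ 2 * (t - r) + K * (t - r) ^ 2 / (r * t ^ 2) := by field_simp; ring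
        _ ≤ K / t ^ 2 * (t - r) + K * (t - r) ^ 2 / (2 * t / 5 * t ^ 2) := by
          gcongr; linarith [hr.1]
        _ = K / t ^ 2 * (t - r) + 5 * K / (2 * t ^ 3) * (t - r) ^ 2 := by field_simp
    · have hcube : (t - s) ^ 3 ≤ 3 * t / 5 * (t - s) ^ 2 := by
        nlinarith [mul_le_mul_of_nonneg_left (by linarith : t - s ≤ 3 * t / 5) (sq_nonneg (t - s))]
      calc _ ≤ K / t ^ 2 / 2 * (t - s) ^ 2
            + 5 * K / (2 * t ^ 3) / 3 * (3 * t / 5 * (t - s) ^ 2) := by gcongr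
        _ = K * (s - t) ^ 2 / t ^ 2 := by field_simp; ring

end AnalyticSemigroup

section LevyExponent

variable {b : ℝ} {μ : Measure ℝ}

noncomputable def levyExponent (b : ℝ) (μ : Measure ℝ) (l : ℝ) : ℝ :=
  b * l + ∫ s in Ioi 0, (1 - Real.exp (-(l * s))) ∂μ

theorem integrableOn_one_sub_exp_neg_mul (hμ1 : IntegrableOn (fun s : ℝ => s) (Ioi 0) μ)
    {l : ℝ} (hl : 0 ≤ l) : IntegrableOn (fun s => 1 - Real.exp (-(l * s))) (Ioi 0) μ :=
  (hμ1.const_mul l).mono' (by fun_prop) <| (ae_restrict_mem measurableSet_Ioi).mono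
    fun s (hs : 0 < s) => by
      rw [Real.norm_of_nonneg (sub_nonneg.mpr (Real.exp_le_one_iff.mpr
        (neg_nonpos.mpr (mul_nonneg hl hs.le))))]
      linarith [Real.one_sub_le_exp_neg (l * s)]

theorem levyExponent_nonneg (hb : 0 ≤ b) {l : ℝ} (hl : 0 ≤ l) : 0 ≤ levyExponent b μ l :=
  add_nonneg (mul_nonneg hb hl) <| setIntegral_nonneg measurableSet_Ioi fun s (hs : 0 < s) =>
    sub_nonneg.mpr (Real.exp_le_one_iff.mpr (neg_nonpos.mpr (mul_nonneg hl hs.le)))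

theorem levyExponent_le (hμ1 : IntegrableOn (fun s : ℝ => s) (Ioi 0) μ)
    (hmom : b + ∫ s in Ioi (0:ℝ), s ∂μ = 1) {l : ℝ} (hl : 0 ≤ l) : levyExponent b μ l ≤ l := by
  have h : ∫ s in Ioi 0, (1 - Real.exp (-(l * s))) ∂μ ≤ ∫ s in Ioi 0, l * s ∂μ :=
    setIntegral_mono_on (integrableOn_one_sub_exp_neg_mul hμ1 hl) (hμ1.const_mul l)
      measurableSet_Ioi fun s _ => by linarith [Real.one_sub_le_exp_neg (l * s)]
  rw [integral_const_mul] at h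
  calc levyExponent b μ l ≤ b * l + l * ∫ s in Ioi 0, s ∂μ := by rw [levyExponent]; linarith
    _ = l := by linear_combination l * hmom

theorem sub_le_levyExponent (hμ1 : IntegrableOn (fun s : ℝ => s) (Ioi 0) μ)
    (hμ2 : IntegrableOn (fun s : ℝ => s ^ 2) (Ioi 0) μ)
    (hmom : b + ∫ s in Ioi (0:ℝ), s ∂μ = 1) {l : ℝ} (hl : 0 ≤ l) :
    l - l ^ 2 * (∫ s in Ioi (0:ℝ), s ^ 2 ∂μ) / 2 ≤ levyExponent b μ l := by
  have h : ∫ s in Ioi 0, (l * s - l ^ 2 / 2 * s ^ 2) ∂μ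
      ≤ ∫ s in Ioi 0, (1 - Real.exp (-(l * s))) ∂μ :=
    setIntegral_mono_on ((hμ1.const_mul l).sub (hμ2.const_mul _))
      (integrableOn_one_sub_exp_neg_mul hμ1 hl) measurableSet_Ioi fun s (hs : 0 < s) => by
        nlinarith [exp_neg_le_one_sub_add_sq_div_two (mul_nonneg hl hs.le)]
  rw [integral_sub (hμ1.const_mul l) (hμ2.const_mul _), integral_const_mul,
    integral_const_mul] at h
  calc l - l ^ 2 * (∫ s in Ioi (0:ℝ), s ^ 2 ∂μ) / 2
      = b * l + (l * (∫ s in Ioi 0, s ∂μ) - l ^ 2 / 2 * ∫ s in Ioi 0, s ^ 2 ∂μ) := by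
        linear_combination (-l) * hmom
    _ ≤ levyExponent b μ l := by rw [levyExponent]; linarith

theorem integral_exp_neg_mul_eq_exp_neg_levyExponent {ν : Measure ℝ} {t : ℝ}
    (hνL : ∀ z : ℂ, 0 ≤ z.re →
      (∫ s in Ici (0:ℝ), Complex.exp (-z * s) ∂ν) =
        Complex.exp (-(t:ℂ) * ((b:ℂ) * z + ∫ s in Ioi (0:ℝ), (1 - Complex.exp (-z * s)) ∂μ)))
    {l : ℝ} (hl : 0 ≤ l) :
    ∫ s in Ici 0, Real.exp (-(l * s)) ∂ν = Real.exp (-(t * levyExponent b μ l)) := by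
  have h := hνL l (by simpa using hl)
  have hcast : ∀ s : ℝ, Complex.exp (-l * s) = ((Real.exp (-(l * s)) : ℝ) : ℂ) := fun s => by
    push_cast; ring_nf
  simp_rw [hcast, ← Complex.ofReal_one, ← Complex.ofReal_sub, integral_complex_ofReal] at h
  rw [← Complex.ofReal_mul, ← Complex.ofReal_add, ← Complex.ofReal_neg, ← Complex.ofReal_mul,
    ← Complex.ofReal_exp, Complex.ofReal_inj] at h
  rw [h, levyExponent, neg_mul]

theorem integrableOn_mul_exp_neg (hμ1 : IntegrableOn (fun s : ℝ => s) (Ioi 0) μ) :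
    IntegrableOn (fun s => s * Real.exp (-s)) (Ioi 0) μ :=
  hμ1.mono' (by fun_prop) <| (ae_restrict_mem measurableSet_Ioi).mono fun s (hs : 0 < s) => by
    rw [Real.norm_of_nonneg (by positivity)]
    exact mul_le_of_le_one_right hs.le (Real.exp_le_one_iff.mpr (by linarith))

theorem add_integral_mul_exp_neg_pos (hb : 0 ≤ b) (hμ1 : IntegrableOn (fun s : ℝ => s) (Ioi 0) μ)
    (hmom : b + ∫ s in Ioi (0:ℝ), s ∂μ = 1) : 0 < b + ∫ s in Ioi 0, s * Real.exp (-s) ∂μ := by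
  have hnonneg : ∀ᵐ s ∂μ.restrict (Ioi 0), 0 ≤ s :=
    (ae_restrict_mem measurableSet_Ioi).mono fun s (hs : 0 < s) => hs.le
  rcases hb.lt_or_eq with hb | rfl
  · exact add_pos_of_pos_of_nonneg hb
      (setIntegral_nonneg measurableSet_Ioi fun s (hs : 0 < s) => by positivity)
  · rw [zero_add] at hmom ⊢
    have hpos : 0 < ∫ s in Ioi 0, s ∂μ := hmom ▸ one_pos
    rw [setIntegral_pos_iff_support_of_nonneg_ae hnonneg hμ1] at hpos
    have hsupp : Function.support (fun s => s * Real.exp (-s)) = Function.support fun s => s := by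
      ext s; simp [Real.exp_ne_zero]
    rwa [setIntegral_pos_iff_support_of_nonneg_ae (hnonneg.mono fun s hs => by positivity)
      (integrableOn_mul_exp_neg hμ1), hsupp]

theorem add_integral_mul_exp_neg_le_one (hμ1 : IntegrableOn (fun s : ℝ => s) (Ioi 0) μ)
    (hmom : b + ∫ s in Ioi (0:ℝ), s ∂μ = 1) : b + ∫ s in Ioi 0, s * Real.exp (-s) ∂μ ≤ 1 :=
  hmom ▸ add_le_add le_rfl (setIntegral_mono_on (integrableOn_mul_exp_neg hμ1) hμ1 measurableSet_Ioi
    fun s (hs : 0 < s) => mul_le_of_le_one_right hs.le (Real.exp_le_one_iff.mpr (by linarith)))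

theorem integral_id_eq_and_integral_sub_sq_le_of_levyExponent {κ : Measure ℝ}
    [IsProbabilityMeasure κ] {t : ℝ} (ht : 0 ≤ t) (hκ : ∀ᵐ s ∂κ, 0 ≤ s) (hb : 0 ≤ b)
    (hμ1 : IntegrableOn (fun s : ℝ => s) (Ioi 0) μ)
    (hμ2 : IntegrableOn (fun s : ℝ => s ^ 2) (Ioi 0) μ)
    (hmom : b + ∫ s in Ioi (0:ℝ), s ∂μ = 1)
    (hL : ∀ l, 0 < l → ∫ s, Real.exp (-(l * s)) ∂κ = Real.exp (-(t * levyExponent b μ l))) :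
    Integrable (fun s => s) κ ∧ ∫ s, s ∂κ = t ∧ Integrable (fun s => (s - t) ^ 2) κ ∧
      ∫ s, (s - t) ^ 2 ∂κ ≤ t * ∫ s in Ioi (0:ℝ), s ^ 2 ∂μ := by
  have hφ₀ : ∀ l : ℝ, 0 < l → 0 ≤ levyExponent b μ l := fun l hl => levyExponent_nonneg hb hl.le
  have hφ_le : ∀ l : ℝ, 0 < l → levyExponent b μ l ≤ l := fun l hl =>
    levyExponent_le hμ1 hmom hl.le
  have hφ_ge : ∀ l : ℝ, 0 < l → l - l ^ 2 * (∫ s in Ioi (0:ℝ), s ^ 2 ∂μ) / 2 ≤ levyExponent b μ l :=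
    fun l hl => sub_le_levyExponent hμ1 hμ2 hmom hl.le
  obtain ⟨hint, hmean⟩ := integrable_id_and_integral_eq_of_laplace ht hκ hL hφ₀ hφ_le hφ_ge
  exact ⟨hint, hmean, integrable_sub_sq_and_integral_le_of_laplace ht hκ hL hφ₀ hφ_le hφ_ge⟩

end LevyExponent

theorem coefficient_le_of_pos_of_le_one {M₀ M₁ σ2 A B : ℝ} (hM₀ : 0 ≤ M₀) (hM₁ : 0 ≤ M₁)
    (hσ2 : 0 ≤ σ2) (hA : 0 < A) (hA1 : A ≤ 1) (hB : 0 ≤ B) :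
    (50 / 9 * M₀ + 5 / 3 * M₁ + 4 * M₁ ^ 2) * σ2
      ≤ 2 * (M₀ + 2 * M₁ + 2 * M₁ ^ 2) * σ2 + 2 * max (2 * M₀) M₁ * (σ2 / A + A / B) := by
  have hmax : 4 * M₀ * σ2 ≤ 2 * max (2 * M₀) M₁ * (σ2 / A + A / B) :=
    calc 4 * M₀ * σ2 = 2 * (2 * M₀) * σ2 := by ring
      _ ≤ 2 * max (2 * M₀) M₁ * (σ2 / A + A / B) := by
        gcongr
        · exact le_max_left _ _
        · exact (le_div_self hσ2 hA hA1).trans (le_add_of_nonneg_right (div_nonneg hA.le hB))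
  nlinarith [mul_nonneg hM₀ hσ2, mul_nonneg hM₁ hσ2]

theorem statement14_general {X : Type*} [NormedAddCommGroup X] [NormedSpace ℂ X] [CompleteSpace X]
    (T : ℝ → X →L[ℂ] X) (M₀ M₁ : ℝ)
    (hTadd : ∀ s t : ℝ, 0 ≤ s → 0 ≤ t → T (s + t) = (T s).comp (T t))
    (hTcont : ∀ x : X, ContinuousOn (fun t => T t x) (Ici 0))
    (hM0 : ∀ t : ℝ, 0 ≤ t → ‖T t‖ ≤ M₀)
    (D : ℝ → X →L[ℂ] X)
    (hD : ∀ x : X, ∀ t : ℝ, 0 < t → HasDerivAt (fun r => T r x) (-(D t x)) t)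
    (hM1 : ∀ t : ℝ, 0 < t → t * ‖D t‖ ≤ M₁)
    (b : ℝ) (hb : 0 ≤ b) (μ : Measure ℝ)
    (hμ1 : IntegrableOn (fun s : ℝ => s) (Ioi 0) μ)
    (hμ2 : IntegrableOn (fun s : ℝ => s ^ 2) (Ioi 0) μ)
    (hmom : b + ∫ s in Ioi (0:ℝ), s ∂μ = 1)
    (ν : ℝ → Measure ℝ)
    (hνL : ∀ r : ℝ, 0 ≤ r → ∀ z : ℂ, 0 ≤ z.re →
      (∫ s in Ici (0:ℝ), Complex.exp (-z * s) ∂ν r) =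
        Complex.exp (-(r:ℂ) *
          ((b:ℂ) * z + ∫ s in Ioi (0:ℝ), (1 - Complex.exp (-z * s)) ∂μ)))
    (x : X) (t : ℝ) (ht : 0 < t) :
    ‖T t x - ∫ s in Ici (0:ℝ), T s x ∂ν t‖ ≤
      ((2 * (M₀ + 2 * M₁ + 2 * M₁ ^ 2) * (∫ s in Ioi (0:ℝ), s ^ 2 ∂μ) +
          2 * max (2 * M₀) M₁ *
            ((∫ s in Ioi (0:ℝ), s ^ 2 ∂μ) /
                (b + ∫ s in Ioi (0:ℝ), s * Real.exp (-s) ∂μ) +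
              (b + ∫ s in Ioi (0:ℝ), s * Real.exp (-s) ∂μ) /
                (b + ∫ s in Ioi (0:ℝ), (1 - Real.exp (-s)) ∂μ))) / t) * ‖x‖ := by
  set κ := (ν t).restrict (Ici 0)
  have hL : ∀ l, 0 ≤ l → ∫ s, Real.exp (-(l * s)) ∂κ = Real.exp (-(t * levyExponent b μ l)) :=
    fun l => integral_exp_neg_mul_eq_exp_neg_levyExponent (hνL t ht.le)
  have : IsProbabilityMeasure κ :=
    isProbabilityMeasure_iff_real.mpr (by simpa [levyExponent] using hL 0 le_rfl)
  have hκ : ∀ᵐ s ∂κ, 0 ≤ s := (ae_restrict_mem measurableSet_Ici).mono fun s hs => hs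
  obtain ⟨hint, hmean, hint2, hvar⟩ := integral_id_eq_and_integral_sub_sq_le_of_levyExponent
    ht.le hκ hb hμ1 hμ2 hmom fun l hl => hL l hl.le
  have hM₀ : 0 ≤ M₀ := (norm_nonneg _).trans (hM0 0 le_rfl)
  have hM₁ : 0 ≤ M₁ := (by positivity : 0 ≤ 1 * ‖D 1‖).trans (hM1 1 one_pos)
  have hestimate := norm_sub_integral_le_of_taylor (F := fun s => T s x) (v := D t x)
    (a := 2 * M₀ * ‖x‖) ht ((hTcont x).aestronglyMeasurable measurableSet_Ici)
    (hκ.mono fun s hs => (norm_sub_le _ _).trans <| by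
      linarith [(T t).le_of_opNorm_le (hM0 t ht.le) x, (T s).le_of_opNorm_le (hM0 s hs) x])
    (fun s hs => norm_taylor_remainder_le hD (by positivity)
      (fun a c => norm_D_apply_sub_le hTadd hD hM1 x) ht hs) hint hmean hint2 hvar
  have hDt : ‖D t x‖ ≤ M₁ / t * ‖x‖ := (D t).le_of_opNorm_le (norm_D_le hM1 ht) x
  have hB : 0 ≤ b + ∫ s in Ioi (0:ℝ), (1 - Real.exp (-s)) ∂μ := by
    simpa [levyExponent] using levyExponent_nonneg (μ := μ) hb zero_le_one
  set σ2 := ∫ s in Ioi (0:ℝ), s ^ 2 ∂μ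
  calc _ ≤ 2 * M₀ * ‖x‖ * (25 / (9 * t) * σ2) + 5 / 3 * σ2 * (M₁ / t * ‖x‖)
        + 4 * M₁ ^ 2 * ‖x‖ * σ2 / t := hestimate.trans (by gcongr)
    _ = ((50 / 9 * M₀ + 5 / 3 * M₁ + 4 * M₁ ^ 2) * σ2 / t) * ‖x‖ := by field_simp; ring
    _ ≤ _ := by
      gcongr
      exact coefficient_le_of_pos_of_le_one hM₀ hM₁
        (setIntegral_nonneg measurableSet_Ioi fun s _ => sq_nonneg s)
        (add_integral_mul_exp_neg_pos hb hμ1 hmom) (add_integral_mul_exp_neg_le_one hμ1 hmom) hB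

/-- Theorem 6.10: for a bounded analytic `C₀`-semigroup `T` (encoded by `‖T(t)‖ ≤ M₀`,
`D(t) = A T(t)` with `d/dt T(t)x = -D(t)x`, `t‖D(t)‖ ≤ M₁`; `M = max(2M₀, M₁)`) and
`φ ∈ Φ` with Lévy data `(b, μ)`, `σ² = ∫ s² dμ`, and subordination measures `ν_t`:
`‖T(t)x - e^(-tφ(A))x‖ ≤ (C/t)‖x‖` for all `x ∈ X`, `t > 0`, with
`C = 2(M₀ + 2M₁ + 2M₁²)σ² + 2M[σ²/φ′(1) + φ′(1)/φ(1)]`. -/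
theorem statement14 {X : Type*} [NormedAddCommGroup X] [NormedSpace ℂ X] [CompleteSpace X]
    (T : ℝ → X →L[ℂ] X) (M₀ M₁ : ℝ)
    (hT0 : T 0 = 1)
    (hTadd : ∀ s t : ℝ, 0 ≤ s → 0 ≤ t → T (s + t) = (T s).comp (T t))
    (hTcont : ∀ x : X, ContinuousOn (fun t => T t x) (Ici 0))
    (hM0 : ∀ t : ℝ, 0 ≤ t → ‖T t‖ ≤ M₀)
    (D : ℝ → X →L[ℂ] X)
    (hD : ∀ x : X, ∀ t : ℝ, 0 < t → HasDerivAt (fun r => T r x) (-(D t x)) t)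
    (hM1 : ∀ t : ℝ, 0 < t → t * ‖D t‖ ≤ M₁)
    (b : ℝ) (hb : 0 ≤ b) (μ : Measure ℝ)
    (hμ1 : IntegrableOn (fun s : ℝ => s) (Ioi 0) μ)
    (hμ2 : IntegrableOn (fun s : ℝ => s ^ 2) (Ioi 0) μ)
    (hmom : b + ∫ s in Ioi (0:ℝ), s ∂μ = 1)
    (ν : ℝ → Measure ℝ)
    (hνsupp : ∀ r : ℝ, 0 ≤ r → (ν r) (Iio 0) = 0)
    (hνsub : ∀ r : ℝ, 0 ≤ r → (ν r) univ ≤ 1)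
    (hνL : ∀ r : ℝ, 0 ≤ r → ∀ z : ℂ, 0 ≤ z.re →
      (∫ s in Ici (0:ℝ), Complex.exp (-z * s) ∂ν r) =
        Complex.exp (-(r:ℂ) *
          ((b:ℂ) * z + ∫ s in Ioi (0:ℝ), (1 - Complex.exp (-z * s)) ∂μ)))
    (x : X) (t : ℝ) (ht : 0 < t) :
    ‖T t x - ∫ s in Ici (0:ℝ), T s x ∂ν t‖ ≤
      ((2 * (M₀ + 2 * M₁ + 2 * M₁ ^ 2) * (∫ s in Ioi (0:ℝ), s ^ 2 ∂μ) +
          2 * max (2 * M₀) M₁ *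
            ((∫ s in Ioi (0:ℝ), s ^ 2 ∂μ) /
                (b + ∫ s in Ioi (0:ℝ), s * Real.exp (-s) ∂μ) +
              (b + ∫ s in Ioi (0:ℝ), s * Real.exp (-s) ∂μ) /
                (b + ∫ s in Ioi (0:ℝ), (1 - Real.exp (-s)) ∂μ))) / t) * ‖x‖ :=
  statement14_general T M₀ M₁ hTadd hTcont hM0 D hD hM1 b hb μ hμ1 hμ2 hmom ν hνL x t ht
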